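/- arXiv:1710.06030 — 4 statements merged into one kernel-verified Lean document; each statement's English description precedes it below -/
import Mathlib

section
/- Let x_1,…,x_n be i.i.d. N(0, I_d) random vectors in ℝ^d, let β* ∈ ℝ^d \ {0}, and for γ, δ > 0 define the event A_γ := { min_{i<j} (x_iᵀβ* − x_jᵀβ*)² ≤ γ² }. If ‖β*‖₂² > (n²(n−1)²/(4δ²π))·γ², then P(A_γ) < δ. -/
/-! The projections `x_iᵀβ*` are independent `N(0, ‖β*‖²)`, so each gap `x_iᵀβ* - x_jᵀβ*` is
`N(0, 2‖β*‖²)`, whose density is at most `1 / (2√π ‖β*‖)`. Hence a single gap falls in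
`[-γ, γ]` with probability at most `γ / (√π ‖β*‖)`, and a union bound over the `n(n-1)/2` pairs
gives `P(A_γ) ≤ n(n-1)γ / (2√π ‖β*‖)`, which is `< δ` exactly when `‖β*‖²` exceeds the stated
threshold. -/

open MeasureTheory ProbabilityTheory

noncomputable section

def l2 {n : ℕ} (v : Fin n → ℝ) : ℝ := Real.sqrt (∑ i, v i ^ 2)

abbrev stdGaussian : Measure ℝ := gaussianReal 0 1

/-- law of `n` iid `N(0, I_d)` random vectors `x_1, …, x_n`. -/
abbrev μX (n d : ℕ) : Measure (Fin n → Fin d → ℝ) :=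
  Measure.pi fun _ => Measure.pi fun _ => stdGaussian

open Real
open scoped NNReal ENNReal

lemma pi_gaussianReal_map_sum_mul {ι : Type*} [Fintype ι] (m : ι → ℝ) (v : ι → ℝ≥0) (c : ι → ℝ) :
    (Measure.pi fun i => gaussianReal (m i) (v i)).map (fun x => ∑ i, x i * c i)
      = gaussianReal (∑ i, c i * m i) (∑ i, .mk (c i ^ 2) (sq_nonneg _) * v i) := by
  have hscale : (Measure.pi fun i => gaussianReal (m i) (v i)).map (fun x i => x i * c i)
      = Measure.pi fun i => gaussianReal (c i * m i) (.mk (c i ^ 2) (sq_nonneg _) * v i) := by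
    rw [Measure.pi_map_pi fun i => (measurable_mul_const (c i)).aemeasurable]
    simp_rw [gaussianReal_map_mul_const]
  rw [show (fun x : ι → ℝ => ∑ i, x i * c i) = (fun p => ∑ i, p i) ∘ (fun x i => x i * c i)
      from rfl,
    ← Measure.map_map (by fun_prop) (by fun_prop), hscale]
  refine Measure.ext_of_charFun (funext fun t => ?_)
  rw [charFun_map_sum_pi_eq_prod, Finset.prod_apply]
  simp only [charFun_gaussianReal, ← Complex.exp_sum]
  push_cast
  congr 1
  simp only [Finset.sum_sub_distrib, Finset.mul_sum, Finset.sum_mul, Finset.sum_div]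

lemma pi_gaussianReal_map_sub {ι : Type*} [Fintype ι] (m : ι → ℝ) (v : ι → ℝ≥0) {i j : ι}
    (hij : i ≠ j) :
    (Measure.pi fun k => gaussianReal (m k) (v k)).map (fun y => y i - y j)
      = gaussianReal (m i - m j) (v i + v j) := by
  have hindep : IndepFun (fun y : ι → ℝ => y i) (fun y => -y j)
      (Measure.pi fun k => gaussianReal (m k) (v k)) :=
    ((iIndepFun_pi (X := fun _ => id) fun _ => aemeasurable_id).indepFun hij).comp
      measurable_id measurable_neg
  have hj : (Measure.pi fun k => gaussianReal (m k) (v k)).map (fun y => -y j)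
      = gaussianReal (-m j) (v j) := by
    rw [show (fun y : ι → ℝ => -y j) = (fun t => -t) ∘ (fun y => y j) from rfl,
      ← Measure.map_map (g := fun t : ℝ => -t) measurable_neg (measurable_pi_apply j),
      (measurePreserving_eval _ j).map_eq, gaussianReal_map_neg]
  simp_rw [sub_eq_add_neg]
  exact gaussianReal_add_gaussianReal_of_indepFun hindep (measurePreserving_eval _ i).map_eq hj

lemma gaussianPDFReal_le_inv_sqrt (μ : ℝ) (v : ℝ≥0) (x : ℝ) :
    gaussianPDFReal μ v x ≤ (√(2 * π * v))⁻¹ := by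
  rw [gaussianPDFReal]
  refine mul_le_of_le_one_right (by positivity) (Real.exp_le_one_iff.2 ?_)
  exact div_nonpos_of_nonpos_of_nonneg (neg_nonpos.2 (sq_nonneg _)) (by positivity)

lemma gaussianReal_Icc_le (μ : ℝ) {v : ℝ≥0} (hv : v ≠ 0) (a b : ℝ) :
    gaussianReal μ v (Set.Icc a b) ≤ ENNReal.ofReal ((b - a) / √(2 * π * v)) := calc
  gaussianReal μ v (Set.Icc a b) = ∫⁻ t in Set.Icc a b, gaussianPDF μ v t :=
    gaussianReal_apply μ hv _
  _ ≤ ∫⁻ _ in Set.Icc a b, ENNReal.ofReal (√(2 * π * v))⁻¹ :=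
    lintegral_mono fun t => ENNReal.ofReal_le_ofReal (gaussianPDFReal_le_inv_sqrt μ v t)
  _ = ENNReal.ofReal ((b - a) / √(2 * π * v)) := by
    rw [setLIntegral_const, Real.volume_Icc, ← ENNReal.ofReal_mul (by positivity), div_eq_mul_inv,
      mul_comm]

lemma measure_exists_lt_le_choose_two_mul {α ι : Type*} [MeasurableSpace α] [Fintype ι]
    [LinearOrder ι] (μ : Measure α) (p : ι → ι → α → Prop) {b : ℝ≥0∞}
    (hb : ∀ i j, i < j → μ {x | p i j x} ≤ b) :
    μ {x | ∃ i j, i < j ∧ p i j x} ≤ (Fintype.card ι).choose 2 * b := by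
  have hunion : {x | ∃ i j, i < j ∧ p i j x}
      = ⋃ q ∈ (Finset.univ.filter fun q : ι × ι => q.1 < q.2), {x | p q.1 q.2 x} := by
    ext x; simp
  calc μ {x | ∃ i j, i < j ∧ p i j x}
      ≤ ∑ q ∈ (Finset.univ.filter fun q : ι × ι => q.1 < q.2), μ {x | p q.1 q.2 x} :=
        hunion ▸ measure_biUnion_finset_le _ _
    _ ≤ ∑ q ∈ (Finset.univ.filter fun q : ι × ι => q.1 < q.2), b :=
        Finset.sum_le_sum fun q hq => hb _ _ (Finset.mem_filter.1 hq).2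
    _ = (Fintype.card ι).choose 2 * b := by
        rw [Finset.sum_const, Fintype.card_product_filter_lt, nsmul_eq_mul]

lemma map_μX_inner_sub {n d : ℕ} (β : Fin d → ℝ) {i j : Fin n} (hij : i ≠ j) :
    (μX n d).map (fun x => ∑ l, x i l * β l - ∑ l, x j l * β l)
      = gaussianReal 0 (2 * l2 β ^ 2).toNNReal := by
  set V : ℝ≥0 := ∑ l, .mk (β l ^ 2) (sq_nonneg _) * 1
  have hinner : (Measure.pi fun _ => gaussianReal 0 1).map (fun y : Fin d → ℝ => ∑ l, y l * β l)
      = gaussianReal 0 V := by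
    simpa only [mul_zero, Finset.sum_const_zero] using
      pi_gaussianReal_map_sum_mul (fun _ => 0) (fun _ => 1) β
  have hproj : MeasurePreserving (fun x k => ∑ l, x k l * β l) (μX n d)
      (Measure.pi fun _ => gaussianReal 0 V) :=
    measurePreserving_pi _ _ fun _ => ⟨by fun_prop, hinner⟩
  rw [show (fun x : Fin n → Fin d → ℝ => ∑ l, x i l * β l - ∑ l, x j l * β l)
      = (fun y => y i - y j) ∘ (fun x k => ∑ l, x k l * β l) from rfl,
    ← Measure.map_map (by fun_prop) hproj.measurable, hproj.map_eq,
    pi_gaussianReal_map_sub _ _ hij, sub_self]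
  congr 1
  ext
  rw [Real.coe_toNNReal _ (by positivity), l2, Real.sq_sqrt (by positivity)]
  simp [V, two_mul]

lemma μX_inner_sub_sq_le {n d : ℕ} {β : Fin d → ℝ} (hβ : 0 < l2 β) (γ : ℝ) {i j : Fin n}
    (hij : i ≠ j) :
    μX n d {x | (∑ l, x i l * β l - ∑ l, x j l * β l) ^ 2 ≤ γ ^ 2}
      ≤ ENNReal.ofReal (|γ| / (√π * l2 β)) := by
  have hset : {x : Fin n → Fin d → ℝ | (∑ l, x i l * β l - ∑ l, x j l * β l) ^ 2 ≤ γ ^ 2}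
      = (fun x => ∑ l, x i l * β l - ∑ l, x j l * β l) ⁻¹' Set.Icc (-|γ|) |γ| := by
    ext; simp [sq_le_sq, abs_le]
  have hvar : (2 * l2 β ^ 2).toNNReal ≠ 0 := by
    rw [Ne, Real.toNNReal_eq_zero, not_le]
    positivity
  rw [hset, ← Measure.map_apply (by fun_prop) measurableSet_Icc, map_μX_inner_sub β hij]
  refine (gaussianReal_Icc_le 0 hvar _ _).trans_eq (congrArg ENNReal.ofReal ?_)
  have hsqrt : √(2 * π * (2 * l2 β ^ 2).toNNReal) = 2 * (√π * l2 β) := by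
    rw [Real.coe_toNNReal _ (by positivity),
      show 2 * π * (2 * l2 β ^ 2) = (2 * l2 β) ^ 2 * π by ring,
      Real.sqrt_mul (by positivity), Real.sqrt_sq (by positivity)]
    ring
  rw [hsqrt]
  field_simp
  ring

theorem gap_event_upper_general (n d : ℕ) (βs : Fin d → ℝ) (γ δ : ℝ)
    (hδ : 0 < δ)
    (hsnr : l2 βs ^ 2 > ((n : ℝ) ^ 2 * ((n : ℝ) - 1) ^ 2 / (4 * δ ^ 2 * Real.pi)) * γ ^ 2) :
    μX n d {x | ∃ i j : Fin n, i < j ∧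
        ((∑ l, x i l * βs l) - ∑ l, x j l * βs l) ^ 2 ≤ γ ^ 2}
      < ENNReal.ofReal δ := by
  have hnorm : 0 < l2 βs := by
    have hpos : 0 < l2 βs ^ 2 := lt_of_le_of_lt (by positivity) hsnr
    exact lt_of_le_of_ne (Real.sqrt_nonneg _) fun h => by simp [← h] at hpos
  refine (measure_exists_lt_le_choose_two_mul _ _ fun i j hij =>
    μX_inner_sub_sq_le hnorm γ hij.ne).trans_lt ?_
  rw [Fintype.card_fin, ← ENNReal.ofReal_natCast, ← ENNReal.ofReal_mul (by positivity),
    ENNReal.ofReal_lt_ofReal_iff hδ, Nat.cast_choose_two]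
  have hsq : (n * (n - 1) * |γ|) ^ 2 < (2 * δ * (√π * l2 βs)) ^ 2 := by
    rw [gt_iff_lt, div_mul_eq_mul_div, div_lt_iff₀ (by positivity)] at hsnr
    rw [mul_pow, sq_abs, mul_pow (2 * δ), mul_pow √π, Real.sq_sqrt Real.pi_pos.le]
    linarith
  have hlin := lt_of_pow_lt_pow_left₀ 2 (by positivity) hsq
  rw [div_mul_div_comm, div_lt_iff₀ (by positivity)]
  linarith

/-- **Lemma 7.**  Let `x_1, …, x_n` be iid `N(0, I_d)`, `β* ≠ 0`, and for `γ, δ > 0` let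
`A_γ = {min_{i<j} (x_iᵀβ* - x_jᵀβ*)² ≤ γ²}`.
If `‖β*‖₂² > (n²(n-1)²/(4δ²π)) γ²` then `P(A_γ) < δ`. -/
theorem gap_event_upper (n d : ℕ) (βs : Fin d → ℝ) (hβ : βs ≠ 0) (γ δ : ℝ)
    (hγ : 0 < γ) (hδ : 0 < δ)
    (hsnr : l2 βs ^ 2 > ((n : ℝ) ^ 2 * ((n : ℝ) - 1) ^ 2 / (4 * δ ^ 2 * Real.pi)) * γ ^ 2) :
    μX n d {x | ∃ i j : Fin n, i < j ∧
        ((∑ l, x i l * βs l) - ∑ l, x j l * βs l) ^ 2 ≤ γ ^ 2}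
      < ENNReal.ofReal δ :=
  gap_event_upper_general n d βs γ δ hδ hsnr

end
end

section
/- Consider the model y = Π*Xβ* + ε with Π* an n×n permutation matrix, X ∈ ℝ^{n×d} a fixed (conditioned-on) design matrix with rows x_1,…,x_n, and ε with i.i.d. N(0,σ²) entries. Define Π̂(β*) := argmax_{Π ∈ P_n} ⟨ΠXβ*, y⟩. If min_{i<j} (x_iᵀβ* − x_jᵀβ*)² > 4σ²·log(n(n−1)/δ) for some δ > 0, then P(Π̂(β*) ≠ Π* | X) < δ. -/
/-!
Write `w = Π* X β*`, so that `y = w + ε`. If `Π̂ ≠ Π*`, the strict rearrangement inequality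
forces some pair `i ≠ j` to be misordered by `y`, i.e. `(w i - w j)² ≤ (w i - w j) (ε j - ε i)`.
As `ε j - ε i` is Gaussian with variance `2σ²`, the Chernoff bound gives this event probability at
most `exp (-(w i - w j)² / (4σ²))`, which the gap assumption makes `< δ / (n (n - 1))`; a union
bound over the `n (n - 1)` ordered pairs concludes.
-/

open MeasureTheory ProbabilityTheory Matrix

noncomputable section

def permVec {n : ℕ} (σ : Equiv.Perm (Fin n)) (v : Fin n → ℝ) : Fin n → ℝ := fun i => v (σ i)

/-- noise distribution: iid N(0, σ²) entries -/
abbrev μNoise (n : ℕ) (σ : ℝ) : Measure (Fin n → ℝ) :=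
  Measure.pi fun _ => gaussianReal 0 ⟨σ ^ 2, sq_nonneg σ⟩

-- The variance `⟨σ ^ 2, _⟩` elaborates at the subtype rather than at `ℝ≥0`, which hides the
-- Gaussian instances from instance search.
instance isProbabilityMeasure_μNoise (n : ℕ) (σ : ℝ) : IsProbabilityMeasure (μNoise n σ) := by
  have := fun _ : Fin n ↦ instIsProbabilityMeasureGaussianReal 0 ⟨σ ^ 2, sq_nonneg σ⟩
  infer_instance

end

open Real Finset
open scoped NNReal

lemma hasSubgaussianMGF_id_gaussianReal (v : ℝ≥0) : HasSubgaussianMGF id v (gaussianReal 0 v) where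
  integrable_exp_mul := integrable_exp_mul_gaussianReal
  mgf_le t := by simp [mgf_id_gaussianReal]

lemma hasSubgaussianMGF_sub_pi_gaussianReal {ι : Type*} [Fintype ι] (v : ℝ≥0) {i j : ι}
    (hij : i ≠ j) :
    HasSubgaussianMGF (fun ε : ι → ℝ ↦ ε j - ε i) (v + v)
      (Measure.pi fun _ ↦ gaussianReal 0 v) := by
  have hcoord (k : ι) : HasSubgaussianMGF (fun ε : ι → ℝ ↦ ε k) v
      (Measure.pi fun _ ↦ gaussianReal 0 v) := by
    refine HasSubgaussianMGF.of_map (X := id) (measurable_pi_apply k).aemeasurable ?_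
    rw [(measurePreserving_eval _ k).map_eq]
    exact hasSubgaussianMGF_id_gaussianReal v
  exact (hcoord j).sub_of_indepFun (hcoord i)
    ((iIndepFun_pi (X := fun _ ↦ id) fun _ ↦ aemeasurable_id).indepFun hij.symm)

lemma measureReal_sq_le_mul_sub_pi_gaussianReal {ι : Type*} [Fintype ι] (v : ℝ≥0) {i j : ι}
    (hij : i ≠ j) (a : ℝ) :
    (Measure.pi fun _ : ι ↦ gaussianReal 0 v).real {ε | a ^ 2 ≤ a * (ε j - ε i)} ≤
      exp (-a ^ 2 / (4 * v)) := by
  have h := ((hasSubgaussianMGF_sub_pi_gaussianReal v hij).const_mul a).measure_ge_le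
    (sq_nonneg a)
  convert h using 2
  -- unfolds the `ℝ≥0`-valued proxy of `const_mul`, which `push_cast` cannot see through
  change _ = -(a ^ 2) ^ 2 / (2 * (a ^ 2 * ((v : ℝ) + v)))
  rcases eq_or_ne a 0 with rfl | ha
  · simp
  · rw [← mul_div_mul_left (-a ^ 2) (4 * (v : ℝ)) (pow_ne_zero 2 ha)]
    ring_nf

section Rearrangement

variable {ι α : Type*} [Fintype ι] [CommRing α] [LinearOrder α] [IsStrictOrderedRing α]
  {w y : ι → α}

lemma Equiv.Perm.eq_one_of_monovary_comp (H : ∀ i j, i ≠ j → 0 < (w i - w j) * (y i - y j))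
    {τ : Equiv.Perm ι} (hτ : Monovary (w ∘ τ) y) : τ = 1 := by
  classical
  by_contra hne
  have hlt {i j : ι} (hij : i ≠ j) (hy : y i ≤ y j) : y i < y j ∧ w i < w j := by
    have hprod := H i j hij
    have hy' : y i < y j := hy.lt_of_ne fun h ↦ by simp [h] at hprod
    exact ⟨hy', by nlinarith⟩
  obtain ⟨i₀, hi₀, hmax⟩ :=
    τ.support.exists_max_image y (Finset.nonempty_iff_ne_empty.2 (by simpa using hne))
  have hτi₀ : τ i₀ ≠ i₀ := Equiv.Perm.mem_support.1 hi₀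
  have hτ'i₀ : τ⁻¹ i₀ ≠ i₀ := fun h ↦ hτi₀ (Equiv.Perm.inv_eq_iff_eq.1 h).symm
  have hdown : w (τ i₀) < w i₀ :=
    (hlt hτi₀ (hmax _ (Equiv.Perm.apply_mem_support.2 hi₀))).2
  have hup : w i₀ ≤ w (τ i₀) := by
    simpa using hτ (hlt hτ'i₀ (hmax _ (Equiv.Perm.mem_support.2 (by simpa using hτ'i₀.symm)))).1
  exact hdown.not_ge hup

lemma Equiv.Perm.sum_comp_mul_lt_sum_mul (H : ∀ i j, i ≠ j → 0 < (w i - w j) * (y i - y j))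
    {τ : Equiv.Perm ι} (hτ : τ ≠ 1) : ∑ k, w (τ k) * y k < ∑ k, w k * y k := by
  have hwy : Monovary w y := fun i j hij ↦ by
    have := H i j (ne_of_apply_ne y hij.ne)
    nlinarith
  exact hwy.sum_comp_perm_mul_lt_sum_mul_iff.2 fun h ↦ hτ (eq_one_of_monovary_comp H h)

lemma exists_sq_sub_le_mul_sub_of_perm {ε : ι → α} {τ : Equiv.Perm ι} (hτ : τ ≠ 1)
    (hmax : ∑ k, w k * (w k + ε k) ≤ ∑ k, w (τ k) * (w k + ε k)) :
    ∃ i j, i ≠ j ∧ (w i - w j) ^ 2 ≤ (w i - w j) * (ε j - ε i) := by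
  by_contra! H
  refine (Equiv.Perm.sum_comp_mul_lt_sum_mul (fun i j hij ↦ ?_) hτ).not_ge hmax
  nlinarith [H i j hij]

end Rearrangement

lemma Real.exp_neg_div_lt_div_of_mul_log_lt {c g N δ : ℝ} (hc : 0 < c) (hN : 0 < N) (hδ : 0 < δ)
    (h : c * log (N / δ) < g) : exp (-g / c) < δ / N := by
  calc exp (-g / c) < exp (-log (N / δ)) :=
        exp_lt_exp.2 (by rw [div_lt_iff₀ hc]; linarith)
    _ = δ / N := by rw [exp_neg, exp_log (by positivity), inv_div]

lemma Finset.sum_lt_of_forall_lt_div_card {ι : Type*} {s : Finset ι} {f : ι → ℝ} {δ : ℝ}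
    (hδ : 0 < δ) (h : ∀ i ∈ s, f i < δ / #s) : ∑ i ∈ s, f i < δ := by
  rcases s.eq_empty_or_nonempty with rfl | hs
  · simpa using hδ
  calc ∑ i ∈ s, f i < ∑ _i ∈ s, δ / #s := sum_lt_sum_of_nonempty hs h
    _ = δ := by rw [sum_const, nsmul_eq_mul]; field_simp [hs.card_pos.ne']

lemma Finset.cast_card_offDiag {α R : Type*} [DecidableEq α] [CommRing R] (s : Finset α) :
    (#s.offDiag : R) = #s * (#s - 1) := by
  rw [offDiag_card, Nat.cast_sub (Nat.le_mul_self _)]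
  push_cast
  ring

/-- **Lemma 8 (permutation recovery with a fixed design).**
Model `y = Π* X β* + ε` with `X` fixed and `ε` iid `N(0,σ²)`; let
`Π̂(β*) = argmax_{Π ∈ P_n} ⟨Π X β*, y⟩`.  If
`min_{i<j}(x_iᵀβ* - x_jᵀβ*)² > 4σ² log(n(n-1)/δ)` for some `δ > 0`, then
`P(Π̂(β*) ≠ Π* | X) < δ`. -/
theorem fixed_design_permutation_recovery
    (n d : ℕ) (X : Matrix (Fin n) (Fin d) ℝ) (βs : Fin d → ℝ) (σ δ : ℝ)
    (hσ : 0 < σ) (hδ : 0 < δ) (πs : Equiv.Perm (Fin n))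
    (Phat : (Fin n → ℝ) → Equiv.Perm (Fin n))
    (hargmax : ∀ ε : Fin n → ℝ, ∀ π' : Equiv.Perm (Fin n),
        (∑ i, permVec π' (X *ᵥ βs) i * (permVec πs (X *ᵥ βs) + ε) i) ≤
        (∑ i, permVec (Phat ε) (X *ᵥ βs) i * (permVec πs (X *ᵥ βs) + ε) i))
    (hgap : ∀ i j : Fin n, i < j →
        4 * σ ^ 2 * Real.log ((n : ℝ) * ((n : ℝ) - 1) / δ) <
          ((X *ᵥ βs) i - (X *ᵥ βs) j) ^ 2) :
    μNoise n σ {ε | Phat ε ≠ πs} < ENNReal.ofReal δ := by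
  set w := permVec πs (X *ᵥ βs)
  have hsep (i j : Fin n) (hij : i ≠ j) :
      4 * σ ^ 2 * log (#(univ : Finset (Fin n)).offDiag / δ) < (w i - w j) ^ 2 := by
    rw [cast_card_offDiag, card_univ, Fintype.card_fin]
    rcases (πs.injective.ne hij).lt_or_gt with h | h
    · exact hgap _ _ h
    · calc _ < _ := hgap _ _ h
        _ = _ := by simp only [w, permVec]; ring
  have hmisordered : {ε | Phat ε ≠ πs} ⊆ ⋃ p ∈ (univ : Finset (Fin n)).offDiag,
      {ε | (w p.1 - w p.2) ^ 2 ≤ (w p.1 - w p.2) * (ε p.2 - ε p.1)} := by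
    intro ε hε
    obtain ⟨i, j, hij, h⟩ :=
      exists_sq_sub_le_mul_sub_of_perm (w := w) (ε := ε) (τ := πs⁻¹ * Phat ε)
      (by rwa [ne_eq, inv_mul_eq_one, eq_comm])
      (by simpa [w, permVec] using hargmax ε πs)
    exact Set.mem_biUnion (x := (i, j)) (by simpa using hij) h
  rw [← ofReal_measureReal, ENNReal.ofReal_lt_ofReal_iff hδ]
  calc (μNoise n σ).real {ε | Phat ε ≠ πs}
      ≤ ∑ p ∈ univ.offDiag, (μNoise n σ).real
          {ε | (w p.1 - w p.2) ^ 2 ≤ (w p.1 - w p.2) * (ε p.2 - ε p.1)} :=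
        (measureReal_mono hmisordered (measure_ne_top _ _)).trans
          (measureReal_biUnion_finset_le _ _)
    _ ≤ ∑ p ∈ univ.offDiag, exp (-(w p.1 - w p.2) ^ 2 / (4 * σ ^ 2)) :=
        sum_le_sum fun p hp ↦
          measureReal_sq_le_mul_sub_pi_gaussianReal _ (mem_offDiag.1 hp).2.2 _
    _ < δ := sum_lt_of_forall_lt_div_card hδ fun p hp ↦
        exp_neg_div_lt_div_of_mul_log_lt (by positivity)
          (Nat.cast_pos.2 (card_pos.2 ⟨p, hp⟩)) hδ (hsep _ _ (mem_offDiag.1 hp).2.2)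
end

section
/- Let 1 ≤ k ≤ n/2 and let Π* be a k-sparse n×n permutation matrix. Define T := (⋃_{Π ∈ P_{n,k}} range(Π − Π*ᵀ)) ∩ S^{n−1}. Then the Gaussian width of T satisfies w(T) ≤ 3.5·√(2k·log(e·n/(2k))). -/
/-!
A vector of `T` is `v ∘ σ - v ∘ Π*⁻¹`, so it vanishes wherever `σ` and `Π*⁻¹` agree: it is a unit
vector supported on at most `2k` coordinates. By Cauchy–Schwarz, `|⟨g, x⟩|²` is then at most
`∑_{i ∈ S} gᵢ²` for some `|S| = 2k`, hence at most `4 log Y(g)` with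
`Y(g) = ∑_{|S| = 2k} exp (¼ ∑_{i ∈ S} gᵢ²)`. Since `E exp (g²/4) = √2`, `E Y = C(n, 2k) 2ᵏ`, and a
Jensen-type argument gives `w(T) ≤ √(4 log E Y) ≤ √(12 k log (e n / 2k))`.
-/

open MeasureTheory ProbabilityTheory

noncomputable section

def dH {n : ℕ} (σ : Equiv.Perm (Fin n)) : ℕ := (Finset.univ.filter fun i => σ i ≠ i).card

abbrev gaussPi (m : ℕ) : Measure (Fin m → ℝ) := Measure.pi fun _ => stdGaussian

/-- Gaussian width of a set `K ⊆ ℝⁿ`. -/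
def gwidth {n : ℕ} (K : Set (Fin n → ℝ)) : ℝ :=
  ∫ g, sSup ((fun x => |∑ i, g i * x i|) '' K) ∂(gaussPi n)

/-- The set `T = (⋃_{Π ∈ P_{n,k}} range(Π - Π*ᵀ)) ∩ S^{n-1}`. -/
def setT (n k : ℕ) (πs : Equiv.Perm (Fin n)) : Set (Fin n → ℝ) :=
  {w | (∃ σ : Equiv.Perm (Fin n), dH σ ≤ k ∧ ∃ v : Fin n → ℝ,
          w = permVec σ v - permVec πs⁻¹ v) ∧ l2 w = 1}

open Real Finset

section GaussianMoments

lemma gaussianPDFReal_zero_one_mul_exp_mul_sq (t x : ℝ) :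
    gaussianPDFReal 0 1 x * exp (t * x ^ 2) = (√(2 * π))⁻¹ * exp (-(1 / 2 - t) * x ^ 2) := by
  simp only [gaussianPDFReal, NNReal.coe_one, mul_one, sub_zero, mul_assoc, ← exp_add]
  ring_nf

/-- For `t ≥ 1 / 2` both sides are junk zeros. -/
lemma integral_exp_mul_sq_stdGaussian (t : ℝ) :
    ∫ x, exp (t * x ^ 2) ∂stdGaussian = (√(1 - 2 * t))⁻¹ := by
  simp only [integral_gaussianReal_eq_integral_smul one_ne_zero, smul_eq_mul,
    gaussianPDFReal_zero_one_mul_exp_mul_sq, integral_const_mul, integral_gaussian]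
  rw [← sqrt_inv, ← sqrt_mul (by positivity), ← sqrt_inv]
  congr 1
  field_simp

lemma integrable_exp_mul_sq_stdGaussian {t : ℝ} (ht : t < 1 / 2) :
    Integrable (fun x => exp (t * x ^ 2)) stdGaussian := by
  refine Integrable.of_integral_ne_zero ?_
  rw [integral_exp_mul_sq_stdGaussian]
  have : 0 < 1 - 2 * t := by linarith
  positivity

variable {ι : Type*} [Fintype ι]

lemma exp_mul_sum_sq_eq_prod [DecidableEq ι] (t : ℝ) (S : Finset ι) (g : ι → ℝ) :
    exp (t * ∑ i ∈ S, g i ^ 2) = ∏ i, exp ((if i ∈ S then t else 0) * g i ^ 2) := by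
  rw [← exp_sum, mul_sum]
  simp [ite_mul, sum_ite_mem]

lemma integrable_exp_mul_sum_sq_gaussian {t : ℝ} (ht : t < 1 / 2) (S : Finset ι) :
    Integrable (fun g : ι → ℝ => exp (t * ∑ i ∈ S, g i ^ 2))
      (Measure.pi fun _ => stdGaussian) := by
  classical
  simp only [exp_mul_sum_sq_eq_prod]
  exact Integrable.fintype_prod fun i =>
    integrable_exp_mul_sq_stdGaussian (by split_ifs <;> linarith)

lemma integral_exp_mul_sum_sq_gaussian (t : ℝ) (S : Finset ι) :
    ∫ g : ι → ℝ, exp (t * ∑ i ∈ S, g i ^ 2) ∂(Measure.pi fun _ => stdGaussian)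
      = (√(1 - 2 * t))⁻¹ ^ #S := by
  classical
  simp only [exp_mul_sum_sq_eq_prod]
  rw [integral_fintype_prod_eq_prod (E := fun _ => ℝ)
    (fun i x => exp ((if i ∈ S then t else 0) * x ^ 2))]
  simp only [integral_exp_mul_sq_stdGaussian]
  simp [apply_ite, prod_ite_mem]

lemma integrable_sum_powersetCard_exp_mul_sum_sq_gaussian {t : ℝ} (ht : t < 1 / 2) (m : ℕ) :
    Integrable (fun g : ι → ℝ => ∑ S ∈ powersetCard m univ, exp (t * ∑ i ∈ S, g i ^ 2))
      (Measure.pi fun _ => stdGaussian) :=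
  integrable_finsetSum _ fun S _ => integrable_exp_mul_sum_sq_gaussian ht S

lemma integral_sum_powersetCard_exp_mul_sum_sq_gaussian {t : ℝ} (ht : t < 1 / 2) (m : ℕ) :
    ∫ g : ι → ℝ, ∑ S ∈ powersetCard m univ, exp (t * ∑ i ∈ S, g i ^ 2)
        ∂(Measure.pi fun _ => stdGaussian)
      = (Fintype.card ι).choose m * (√(1 - 2 * t))⁻¹ ^ m := by
  rw [integral_finsetSum _ fun S _ => integrable_exp_mul_sum_sq_gaussian ht S,
    sum_congr rfl fun S hS => by
      rw [integral_exp_mul_sum_sq_gaussian, mem_powersetCard_univ.1 hS],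
    sum_const, card_powersetCard, card_univ, nsmul_eq_mul]

end GaussianMoments

/-- Tangent-line bounds for `√` at `B := log (∫ Y) / t` and for `log` at `∫ Y` replace Jensen's
inequality, so that no integrability of `F` is needed. -/
theorem integral_le_sqrt_log_integral_div {α : Type*} [MeasurableSpace α] {μ : Measure α}
    [IsProbabilityMeasure μ] {t : ℝ} (ht : 0 < t) {F Y : α → ℝ} (hF : ∀ x, 0 ≤ F x)
    (hFY : ∀ x, F x ≤ √(log (Y x) / t)) (hY : ∀ x, 1 ≤ Y x) (hYint : Integrable Y μ)
    (hA : 1 < ∫ x, Y x ∂μ) :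
    ∫ x, F x ∂μ ≤ √(log (∫ x, Y x ∂μ) / t) := by
  set A := ∫ x, Y x ∂μ
  set B := log A / t
  have hB : 0 < B := div_pos (log_pos hA) ht
  have hA0 : 0 < A := by linarith
  have hpt : ∀ x, F x ≤ (t * A * (2 * √B))⁻¹ * Y x + (log A - 1 + t * B) / (t * (2 * √B)) := by
    intro x
    have hu : 0 ≤ log (Y x) / t := div_nonneg (log_nonneg (hY x)) ht.le
    have hamgm : √(log (Y x) / t) ≤ (log (Y x) / t + B) / (2 * √B) := by
      rw [le_div_iff₀ (by positivity)]
      nlinarith [sq_nonneg (√(log (Y x) / t) - √B), sq_sqrt hu, sq_sqrt hB.le]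
    have hYx : 0 < Y x := by linarith [hY x]
    have hlog : log (Y x) ≤ Y x / A + log A - 1 := by
      have := log_le_sub_one_of_pos (div_pos hYx hA0)
      rw [log_div hYx.ne' hA0.ne'] at this
      linarith
    calc F x ≤ (log (Y x) / t + B) / (2 * √B) := (hFY x).trans hamgm
      _ ≤ ((Y x / A + log A - 1) / t + B) / (2 * √B) := by gcongr
      _ = _ := by field_simp; ring
  calc ∫ x, F x ∂μ
      ≤ ∫ x, (t * A * (2 * √B))⁻¹ * Y x + (log A - 1 + t * B) / (t * (2 * √B)) ∂μ :=
        integral_mono_of_nonneg (.of_forall hF)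
          ((hYint.const_mul _).add (integrable_const _)) (.of_forall hpt)
    _ = √B := by
        rw [integral_add (hYint.const_mul _) (integrable_const _), integral_const_mul,
          integral_const, probReal_univ, one_smul, show log A = t * B by simp only [B]; field_simp]
        field_simp
        rw [sq_sqrt hB.le]
        ring

lemma mul_le_log_sum_exp_mul {ι : Type*} {s : Finset ι} {f : ι → ℝ} {a : ι} (ha : a ∈ s)
    (t : ℝ) : t * f a ≤ log (∑ b ∈ s, exp (t * f b)) :=
  (le_log_iff_exp_le (sum_pos (fun _ _ => exp_pos _) ⟨a, ha⟩)).2 <|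
    single_le_sum (f := fun b => exp (t * f b)) (fun _ _ => (exp_pos _).le) ha

lemma sq_sum_mul_le_of_support_subset {ι : Type*} [Fintype ι] {S : Finset ι} {x : ι → ℝ}
    (hx : ∀ i ∉ S, x i = 0) (g : ι → ℝ) :
    (∑ i, g i * x i) ^ 2 ≤ (∑ i ∈ S, g i ^ 2) * ∑ i, x i ^ 2 := by
  have hxS : ∀ {h : ι → ℝ}, (∀ i ∉ S, h i = 0) → ∑ i, h i = ∑ i ∈ S, h i := fun h =>
    (sum_subset (subset_univ S) fun i _ hi => h i hi).symm
  rw [hxS (h := fun i => g i * x i) fun i hi => by simp [hx i hi],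
    hxS (h := fun i => x i ^ 2) fun i hi => by simp [hx i hi]]
  exact sum_mul_sq_le_sq_mul_sq S g x

lemma Nat.choose_le_exp_one_mul_div_pow (n m : ℕ) : (n.choose m : ℝ) ≤ (exp 1 * n / m) ^ m := by
  rcases m.eq_zero_or_pos with rfl | hm
  · simp
  calc (n.choose m : ℝ) ≤ n ^ m / m.factorial := Nat.choose_le_pow_div m n
    _ = (n / m) ^ m * (m ^ m / m.factorial) := by rw [div_pow]; field_simp
    _ ≤ (n / m) ^ m * exp m := by gcongr; exact pow_div_factorial_le_exp _ (by positivity) m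
    _ = (exp 1 * n / m) ^ m := by rw [← exp_one_pow]; ring

lemma log_choose_mul_sqrt_two_pow_le {n m : ℕ} (hm : 0 < m) (hmn : m ≤ n) :
    log (n.choose m * √2 ^ m) ≤ 3 / 2 * m * log (exp 1 * n / m) := by
  have hm' : (0 : ℝ) < m := by exact_mod_cast hm
  have hmn' : (m : ℝ) ≤ n := by exact_mod_cast hmn
  have hL : 1 ≤ log (exp 1 * n / m) := by
    rw [le_log_iff_exp_le (by have := hm'.trans_le hmn'; positivity), le_div_iff₀ hm']
    gcongr
  have hchoose : log (n.choose m) ≤ m * log (exp 1 * n / m) := by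
    rw [← log_pow]
    exact log_le_log (by exact_mod_cast Nat.choose_pos hmn) (Nat.choose_le_exp_one_mul_div_pow n m)
  have hsqrt : log (√2 ^ m) ≤ m / 2 := by
    rw [log_pow, log_sqrt zero_le_two]
    have := log_two_lt_d9
    nlinarith
  rw [log_mul (by exact_mod_cast (Nat.choose_pos hmn).ne') (by positivity)]
  nlinarith

lemma card_filter_ne_le_dH_add_dH {n : ℕ} (σ τ : Equiv.Perm (Fin n)) :
    #{i | σ i ≠ τ i} ≤ dH σ + dH τ := by
  refine (card_le_card fun i hi => ?_).trans (card_union_le _ _)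
  simp only [mem_filter, mem_univ, true_and, mem_union] at hi ⊢
  by_contra! h
  exact hi (h.1.trans h.2.symm)

lemma dH_inv {n : ℕ} (σ : Equiv.Perm (Fin n)) : dH σ⁻¹ = dH σ :=
  congrArg card σ.support_inv

lemma exists_card_eq_forall_notMem_eq_zero_of_mem_setT {n k : ℕ} {πs : Equiv.Perm (Fin n)}
    (hπs : dH πs ≤ k) (hkn : 2 * k ≤ n) {x : Fin n → ℝ} (hx : x ∈ setT n k πs) :
    ∃ S : Finset (Fin n), #S = 2 * k ∧ ∀ i ∉ S, x i = 0 := by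
  obtain ⟨⟨σ, hσ, v, rfl⟩, -⟩ := hx
  have hD : #{i | σ i ≠ πs⁻¹ i} ≤ 2 * k := by
    have := card_filter_ne_le_dH_add_dH σ πs⁻¹
    rw [dH_inv] at this
    omega
  obtain ⟨S, hDS, -, hS⟩ := exists_subsuperset_card_eq (subset_univ _) hD (by simpa using hkn)
  refine ⟨S, hS, fun i hi => ?_⟩
  have : σ i = πs⁻¹ i := by
    by_contra h
    exact hi (hDS (by simpa using h))
  simp [permVec, this]

lemma sSup_abs_inner_setT_le {n k : ℕ} {πs : Equiv.Perm (Fin n)} (hπs : dH πs ≤ k)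
    (hkn : 2 * k ≤ n) {t : ℝ} (ht : 0 < t) (g : Fin n → ℝ) :
    sSup ((fun x => |∑ i, g i * x i|) '' setT n k πs)
      ≤ √(log (∑ S ∈ powersetCard (2 * k) univ, exp (t * ∑ i ∈ S, g i ^ 2)) / t) := by
  refine Real.sSup_le ?_ (sqrt_nonneg _)
  rintro _ ⟨x, hx, rfl⟩
  obtain ⟨S, hS, hxS⟩ := exists_card_eq_forall_notMem_eq_zero_of_mem_setT hπs hkn hx
  have hx1 : ∑ i, x i ^ 2 = 1 := by simpa [l2] using hx.2
  refine le_sqrt_of_sq_le ((le_div_iff₀ ht).2 ?_)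
  calc |∑ i, g i * x i| ^ 2 * t ≤ t * ∑ i ∈ S, g i ^ 2 := by
        have := sq_sum_mul_le_of_support_subset hxS g
        rw [hx1, mul_one] at this
        rw [sq_abs]
        nlinarith
    _ ≤ _ := mul_le_log_sum_exp_mul (f := fun S => ∑ i ∈ S, g i ^ 2)
        (mem_powersetCard_univ.2 hS) t

/-- **Gaussian width bound for `T`:** if `1 ≤ k ≤ n/2` and `Π*` is `k`-sparse, then
`w(T) ≤ 3.5 √(2k log(e n/(2k)))`. -/
theorem gwidth_setT_bound (n k : ℕ) (hk : 1 ≤ k) (hkn : 2 * k ≤ n)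
    (πs : Equiv.Perm (Fin n)) (hπs : dH πs ≤ k) :
    gwidth (setT n k πs) ≤
      3.5 * Real.sqrt (2 * (k : ℝ) * Real.log (Real.exp 1 * n / (2 * (k : ℝ)))) := by
  set Y : (Fin n → ℝ) → ℝ := fun g =>
    ∑ S ∈ powersetCard (2 * k) univ, exp (1 / 4 * ∑ i ∈ S, g i ^ 2)
  have hYint : Integrable Y (gaussPi n) :=
    integrable_sum_powersetCard_exp_mul_sum_sq_gaussian (by norm_num) _
  have hA : ∫ g, Y g ∂gaussPi n = n.choose (2 * k) * √2 ^ (2 * k) := by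
    rw [integral_sum_powersetCard_exp_mul_sum_sq_gaussian (by norm_num), Fintype.card_fin,
      ← sqrt_inv]
    norm_num
  have hY1 : ∀ g, 1 ≤ Y g := fun g => by
    obtain ⟨S, hS⟩ : (powersetCard (2 * k) (univ : Finset (Fin n))).Nonempty :=
      powersetCard_nonempty.2 (by simpa using hkn)
    exact (one_le_exp (by positivity)).trans (single_le_sum (fun _ _ => (exp_pos _).le) hS)
  have hA1 : 1 < ∫ g, Y g ∂gaussPi n := by
    rw [hA]
    exact one_lt_mul_of_le_of_lt (by exact_mod_cast Nat.choose_pos hkn)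
      (one_lt_pow₀ one_lt_sqrt_two (by omega))
  have hlogA := log_choose_mul_sqrt_two_pow_le (by omega) hkn
  push_cast at hlogA
  calc gwidth (setT n k πs) ≤ √(log (∫ g, Y g ∂gaussPi n) / (1 / 4)) :=
        integral_le_sqrt_log_integral_div (by norm_num)
          (fun g => Real.sSup_nonneg fun _ ⟨_, _, hy⟩ => hy ▸ abs_nonneg _)
          (sSup_abs_inner_setT_le hπs hkn (by norm_num)) hY1 hYint hA1
    _ ≤ √(3.5 ^ 2 * (2 * k * log (exp 1 * n / (2 * k)))) := by
        gcongr
        have := log_nonneg hA1.le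
        rw [hA] at this ⊢
        linarith
    _ = 3.5 * √(2 * k * log (exp 1 * n / (2 * k))) := by
        rw [sqrt_mul (by norm_num), sqrt_sq (by norm_num)]

end
end

section
/- Let P be an orthogonal projection matrix on ℝⁿ, let e* ∈ ℝⁿ be supported on S ⊆ {1,…,n} (i.e., e*_i = 0 for i ∉ S), let ε ∈ ℝⁿ, λ > 0, and set z := √n·e* + ε. Let ẽ be any minimizer over e ∈ ℝⁿ of (1/n)·‖P(z − √n·e)‖₂² + λ‖e‖₁. If λ ≥ 4·‖Pε‖_∞/√n, then ‖(ẽ − e*)_{Sᶜ}‖₁ ≤ 3·‖(ẽ − e*)_S‖₁. -/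
/-! Put `h = ẽ - e*`. Comparing the objective at `ẽ` with its value at `e*` and expanding the
square gives `λ (‖ẽ‖₁ - ‖e*‖₁) ≤ (2/√n) ⟨Pε, Ph⟩ = (2/√n) ⟨Pε, h⟩`, the last step because `P` is an
orthogonal projection. Hölder and the choice of `λ` bound the right side by `(λ/2) ‖h‖₁`, while
the support of `e*` gives `‖ẽ‖₁ - ‖e*‖₁ ≥ ‖h_{Sᶜ}‖₁ - ‖h_S‖₁`. Dividing by `λ > 0`,
`‖h_{Sᶜ}‖₁ - ‖h_S‖₁ ≤ (‖h_S‖₁ + ‖h_{Sᶜ}‖₁) / 2`, which is the cone condition. -/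

open Matrix

noncomputable section

def l1 {n : ℕ} (v : Fin n → ℝ) : ℝ := ∑ i, |v i|

section

variable {ι : Type*} [Fintype ι]

theorem l2_sq {n : ℕ} (v : Fin n → ℝ) : l2 v ^ 2 = v ⬝ᵥ v := by
  rw [l2, Real.sq_sqrt (Finset.sum_nonneg fun i _ => sq_nonneg (v i))]
  simp only [dotProduct, sq]

theorem dotProduct_self_sub_two_mul_le (a b : ι → ℝ) (c : ℝ) :
    a ⬝ᵥ a - 2 * c * (a ⬝ᵥ b) ≤ (a - c • b) ⬝ᵥ (a - c • b) := by
  have hb : 0 ≤ b ⬝ᵥ b := Finset.sum_nonneg fun i _ => mul_self_nonneg (b i)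
  have expand : (a - c • b) ⬝ᵥ (a - c • b) = a ⬝ᵥ a - 2 * c * (a ⬝ᵥ b) + c ^ 2 * (b ⬝ᵥ b) := by
    simp only [sub_dotProduct, dotProduct_sub, smul_dotProduct, dotProduct_smul, smul_eq_mul,
      dotProduct_comm b a]
    ring
  nlinarith [sq_nonneg c]

theorem mulVec_dotProduct_mulVec_of_isProj {R : Type*} [CommSemiring R] {P : Matrix ι ι R}
    (hPsym : Pᵀ = P) (hPidem : P * P = P) (x y : ι → R) :
    (P *ᵥ x) ⬝ᵥ (P *ᵥ y) = (P *ᵥ x) ⬝ᵥ y := by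
  rw [dotProduct_mulVec, ← mulVec_transpose, hPsym, mulVec_mulVec, hPidem]

theorem dotProduct_le_mul_sum_abs {a h : ι → ℝ} {M : ℝ} (ha : ∀ i, |a i| ≤ M) :
    a ⬝ᵥ h ≤ M * ∑ i, |h i| := by
  rw [Finset.mul_sum]
  refine Finset.sum_le_sum fun i _ => ?_
  calc a i * h i ≤ |a i| * |h i| := by rw [← abs_mul]; exact le_abs_self _
    _ ≤ M * |h i| := mul_le_mul_of_nonneg_right (ha i) (abs_nonneg _)

theorem sum_abs_sub_sum_abs_ge_of_support [DecidableEq ι] (S : Finset ι) {x y : ι → ℝ}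
    (hy : ∀ i, i ∉ S → y i = 0) :
    ∑ i ∈ Sᶜ, |x i - y i| - ∑ i ∈ S, |x i - y i| ≤ ∑ i, |x i| - ∑ i, |y i| := by
  have hcompl : ∑ i ∈ Sᶜ, |x i - y i| = ∑ i ∈ Sᶜ, |x i| :=
    Finset.sum_congr rfl fun i hi => by rw [hy i (Finset.mem_compl.mp hi), sub_zero]
  have hyS : ∑ i, |y i| = ∑ i ∈ S, |y i| :=
    (Finset.sum_subset (Finset.subset_univ S) fun i _ hi => by rw [hy i hi, abs_zero]).symm
  have htri : ∑ i ∈ S, (|y i| - |x i|) ≤ ∑ i ∈ S, |x i - y i| :=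
    Finset.sum_le_sum fun i _ => by rw [abs_sub_comm]; exact abs_sub_abs_le_abs_sub _ _
  rw [Finset.sum_sub_distrib] at htri
  rw [hcompl, hyS, ← Finset.sum_add_sum_compl S fun i => |x i|]
  linarith

theorem lasso_basic_inequality {n : ℕ} (P : Matrix (Fin n) (Fin n) ℝ) (z e₀ et : Fin n → ℝ)
    {w c lam : ℝ} (hw : 0 ≤ w)
    (hmin : w * l2 (P *ᵥ (z - c • et)) ^ 2 + lam * l1 et ≤
      w * l2 (P *ᵥ (z - c • e₀)) ^ 2 + lam * l1 e₀) :
    lam * (l1 et - l1 e₀) ≤ 2 * w * c * ((P *ᵥ (z - c • e₀)) ⬝ᵥ (P *ᵥ (et - e₀))) := by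
  set a := P *ᵥ (z - c • e₀)
  set b := P *ᵥ (et - e₀)
  have hres : P *ᵥ (z - c • et) = a - c • b := by
    rw [← mulVec_smul, ← mulVec_sub, smul_sub]
    congr 1
    abel
  rw [hres, l2_sq, l2_sq] at hmin
  have := mul_le_mul_of_nonneg_left (dotProduct_self_sub_two_mul_le a b c) hw
  nlinarith

end

/-- **Cone condition for the ℓ₁-penalized projected least squares.**
Let `P` be an orthogonal projection matrix (`P = Pᵀ = P²`), `e*` supported on `S`,
`z = √n e* + ε`, and let `ẽ` minimize `(1/n)‖P(z - √n e)‖₂² + λ‖e‖₁`.  If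
`λ ≥ 4‖Pε‖_∞/√n` then `‖(ẽ - e*)_{Sᶜ}‖₁ ≤ 3‖(ẽ - e*)_S‖₁`. -/
theorem lasso_cone_condition (n : ℕ) (P : Matrix (Fin n) (Fin n) ℝ)
    (hPsym : Pᵀ = P) (hPidem : P * P = P)
    (S : Finset (Fin n)) (estar εv : Fin n → ℝ)
    (hsupp : ∀ i, i ∉ S → estar i = 0)
    (lam : ℝ) (hlam : 0 < lam)
    (hlam2 : ∀ i, 4 * |(P *ᵥ εv) i| / Real.sqrt n ≤ lam)
    (et : Fin n → ℝ)
    (hmin : ∀ e : Fin n → ℝ,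
        (1 / (n : ℝ)) * l2 (P *ᵥ ((Real.sqrt n • estar + εv) - Real.sqrt n • et)) ^ 2
            + lam * l1 et ≤
        (1 / (n : ℝ)) * l2 (P *ᵥ ((Real.sqrt n • estar + εv) - Real.sqrt n • e)) ^ 2
            + lam * l1 e) :
    (∑ i ∈ Sᶜ, |et i - estar i|) ≤ 3 * ∑ i ∈ S, |et i - estar i| := by
  rcases Nat.eq_zero_or_pos n with rfl | hn
  · simp [Finset.eq_empty_of_isEmpty]
  set c := Real.sqrt n
  have hc : 0 < c := Real.sqrt_pos.mpr (by exact_mod_cast hn)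
  have hcc : c * c = n := Real.mul_self_sqrt (Nat.cast_nonneg n)
  have hbasic := lasso_basic_inequality P _ estar et (by positivity) (hmin estar)
  rw [add_sub_cancel_left, mulVec_dotProduct_mulVec_of_isProj hPsym hPidem] at hbasic
  have hPε : ∀ i, |(P *ᵥ εv) i| ≤ lam * c / 4 := fun i => by
    have := hlam2 i
    rw [div_le_iff₀ hc] at this
    linarith
  have hcross : 2 * (1 / (n : ℝ)) * c * ((P *ᵥ εv) ⬝ᵥ (et - estar))
      ≤ lam / 2 * ∑ i, |et i - estar i| := by
    calc _ ≤ 2 * (1 / (n : ℝ)) * c * (lam * c / 4 * ∑ i, |et i - estar i|) := by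
          gcongr
          exact dotProduct_le_mul_sum_abs hPε
      _ = lam / 2 * ∑ i, |et i - estar i| := by
          rw [← hcc]
          field_simp
          ring
  have hl1 := sum_abs_sub_sum_abs_ge_of_support S (x := et) hsupp
  rw [← Finset.sum_add_sum_compl S] at hcross
  have hgap : lam * (∑ i ∈ Sᶜ, |et i - estar i| - ∑ i ∈ S, |et i - estar i|)
      ≤ lam * ((∑ i ∈ S, |et i - estar i| + ∑ i ∈ Sᶜ, |et i - estar i|) / 2) := by
    unfold l1 at hbasic
    nlinarith
  linarith [le_of_mul_le_mul_left hgap hlam]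

end
end
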